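/- arXiv:2505.08035 — 5 statements merged into one kernel-verified Lean document; each statement's English description precedes it below -/
import Mathlib

section
/- For integers m ≥ t ≥ 1, the binomial coefficient C(2m+1, m+t+1) equals the sum over γ from 0 to m−t of C(m, γ) · C(m−γ, ⌊(m−γ−t)/2⌋) · 2^γ. -/
open Polynomial Finset

/-!
Expand `(1 + X) ^ (2m + 1) = (1 + X) * (2X + (1 + X ^ 2)) ^ m` by the binomial theorem in
`2X` and `1 + X ^ 2`. The `γ`-th term contributes `C(m, γ) 2 ^ γ` times the sum of the
coefficients of `(1 + X ^ 2) ^ (m - γ)` at degrees `m - γ + t` and `m - γ + t + 1`. Only one of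
these degrees is even, so the sum is `C(m - γ, ⌈(m - γ + t)/2⌉) = C(m - γ, ⌊(m - γ - t)/2⌋)`,
which vanishes once `m - γ < t`.
-/

namespace Polynomial

variable {R : Type*} [CommSemiring R]

theorem coeff_one_add_X_sq_pow (n j : ℕ) :
    ((1 + X ^ 2 : R[X]) ^ n).coeff j = if 2 ∣ j then (n.choose (j / 2) : R) else 0 := by
  have h : (1 + X ^ 2 : R[X]) ^ n = expand R 2 ((1 + X) ^ n) := by
    rw [map_pow, map_add, map_one, expand_X]
  rw [h, coeff_expand two_pos, coeff_one_add_X_pow]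

theorem coeff_one_add_X_mul_one_add_X_sq_pow (n t : ℕ) :
    ((1 + X) * (1 + X ^ 2 : R[X]) ^ n).coeff (n + t + 1) =
      if t ≤ n then (n.choose ((n - t) / 2) : R) else 0 := by
  have hsum : ((1 + X) * (1 + X ^ 2 : R[X]) ^ n).coeff (n + t + 1) =
      (n.choose ((n + t + 1) / 2) : R) := by
    rw [add_mul, one_mul, coeff_add, coeff_X_mul, coeff_one_add_X_sq_pow, coeff_one_add_X_sq_pow]
    rcases Nat.even_or_odd (n + t) with ⟨j, hj⟩ | ⟨j, hj⟩
    · rw [if_neg (by omega), if_pos (by omega), zero_add,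
        show (n + t) / 2 = (n + t + 1) / 2 by omega]
    · rw [if_pos (by omega), if_neg (by omega), add_zero]
  rw [hsum]
  split_ifs with h
  · rw [← Nat.choose_symm (by omega), show n - (n + t + 1) / 2 = (n - t) / 2 by omega]
  · rw [Nat.choose_eq_zero_of_lt (by omega), Nat.cast_zero]

theorem one_add_X_pow_two_mul_add_one (m : ℕ) :
    (1 + X : R[X]) ^ (2 * m + 1) =
      ∑ γ ∈ range (m + 1),
        C (m.choose γ * 2 ^ γ : R) * (X ^ γ * ((1 + X) * (1 + X ^ 2) ^ (m - γ))) := by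
  rw [pow_succ', pow_mul, show (1 + X : R[X]) ^ 2 = 2 * X + (1 + X ^ 2) by ring, add_pow, mul_sum]
  refine sum_congr rfl fun γ _ => ?_
  simp only [map_mul, map_pow, map_natCast, map_ofNat, mul_pow]
  ring

end Polynomial

theorem binomial_identity_general (m t : ℕ) (htm : t ≤ m) :
    Nat.choose (2 * m + 1) (m + t + 1) =
      ∑ γ ∈ Finset.range (m - t + 1),
        Nat.choose m γ * Nat.choose (m - γ) ((m - γ - t) / 2) * 2 ^ γ := by
  have h := congrArg (coeff · (m + t + 1)) (one_add_X_pow_two_mul_add_one (R := ℕ) m)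
  simp only [coeff_one_add_X_pow, finsetSum_coeff, coeff_C_mul, Nat.cast_id] at h
  have hterm : ∀ γ ∈ range (m + 1),
      m.choose γ * 2 ^ γ * (X ^ γ * ((1 + X) * (1 + X ^ 2 : ℕ[X]) ^ (m - γ))).coeff (m + t + 1) =
        if t ≤ m - γ then m.choose γ * (m - γ).choose ((m - γ - t) / 2) * 2 ^ γ else 0 := by
    intro γ hγ
    rw [mem_range] at hγ
    rw [coeff_X_pow_mul', if_pos (by omega), show m + t + 1 - γ = m - γ + t + 1 by omega,
      coeff_one_add_X_mul_one_add_X_sq_pow, Nat.cast_id, mul_ite, mul_zero, mul_right_comm]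
  have hrange : (range (m + 1)).filter (fun γ => t ≤ m - γ) = range (m - t + 1) := by
    ext γ
    simp only [mem_filter, mem_range]
    omega
  rw [h, sum_congr rfl hterm, ← sum_filter, hrange]

/-- For integers `m ≥ t ≥ 1`, `C(2m+1, m+t+1) = Σ_{γ=0}^{m-t} C(m,γ)·C(m-γ, ⌊(m-γ-t)/2⌋)·2^γ`. -/
theorem binomial_identity (m t : ℕ) (ht : 1 ≤ t) (htm : t ≤ m) :
    Nat.choose (2 * m + 1) (m + t + 1) =
      ∑ γ ∈ Finset.range (m - t + 1),
        Nat.choose m γ * Nat.choose (m - γ) ((m - γ - t) / 2) * 2 ^ γ :=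
  binomial_identity_general m t htm
end

section
/- For any integer γ ≥ 0 and any nonzero z (in a field, or as Laurent polynomials), (1 + z^{-1})·(z + z^{-1})^γ = Σ_{α=0}^{γ} C(γ, ⌊(γ−α)/2⌋) · (z^α + z^{-α-1}). -/
open Finset

private lemma sum_range_even_odd {M : Type*} [AddCommMonoid M] (n : ℕ) (g : ℕ → M) :
    ∑ k ∈ range (2 * n), g k = ∑ j ∈ range n, (g (2 * j) + g (2 * j + 1)) := by
  induction n with
  | zero => simp
  | succ n ih =>
    rw [Finset.sum_range_succ, ← ih, show 2 * (n + 1) = 2 * n + 1 + 1 by ring,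
      Finset.sum_range_succ, Finset.sum_range_succ, add_assoc]

private lemma lemA {K : Type*} [CommRing K] (γ : ℕ) (z : K) :
    (1 + z) * (z ^ 2 + 1) ^ γ
      = ∑ k ∈ range (2 * γ + 2), (Nat.choose γ (k / 2) : K) * z ^ k := by
  rw [show 2 * γ + 2 = 2 * (γ + 1) by ring, sum_range_even_odd, add_pow, Finset.mul_sum]
  apply Finset.sum_congr rfl
  intro j hj
  have h1 : (2 * j) / 2 = j := by omega
  have h2 : (2 * j + 1) / 2 = j := by omega
  rw [h1, h2, one_pow]
  ring

private lemma lemB {K : Type*} [CommRing K] (γ : ℕ) (z : K) :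
    ∑ α ∈ range (γ + 1),
        (Nat.choose γ ((γ - α) / 2) : K) * (z ^ (γ + 1 + α) + z ^ (γ - α))
      = ∑ k ∈ range (2 * γ + 2), (Nat.choose γ (k / 2) : K) * z ^ k := by
  rw [show 2 * γ + 2 = (γ + 1) + (γ + 1) by ring]
  conv_rhs => rw [Finset.sum_range_add]
  simp_rw [mul_add]
  rw [Finset.sum_add_distrib, add_comm]
  congr 1
  · -- reflection part
    have := Finset.sum_range_reflect (fun k => (Nat.choose γ (k / 2) : K) * z ^ k) (γ + 1)
    rw [← this]
    apply Finset.sum_congr rfl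
    intro α hα
    simp
  · -- shifted part
    apply Finset.sum_congr rfl
    intro j hj
    have hj' : j ≤ γ := by
      have := Finset.mem_range.mp hj; omega
    have h1 : (γ + 1 + j) / 2 = γ - (γ - j) / 2 := by omega
    have h2 : (γ - j) / 2 ≤ γ := by omega
    rw [h1, Nat.choose_symm h2]

private lemma key {K : Type*} [CommRing K] (γ : ℕ) (z : K) :
    (1 + z) * (z ^ 2 + 1) ^ γ =
      ∑ α ∈ range (γ + 1),
        (Nat.choose γ ((γ - α) / 2) : K) * (z ^ (γ + 1 + α) + z ^ (γ - α)) := by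
  rw [lemA, lemB]

/-- For `γ ≥ 0` and nonzero `z` in a field,
`(1 + z⁻¹)·(z + z⁻¹)^γ = Σ_{α=0}^{γ} C(γ, ⌊(γ−α)/2⌋)·(z^α + z^{-α-1})`. -/
theorem laurent_identity {K : Type*} [Field K] (γ : ℕ) (z : K) (hz : z ≠ 0) :
    (1 + z⁻¹) * (z + z⁻¹) ^ γ =
      ∑ α ∈ Finset.range (γ + 1),
        (Nat.choose γ ((γ - α) / 2) : K) * (z ^ (α : ℤ) + z ^ (-(α : ℤ) - 1)) := by
  have hz1 : z ^ (γ + 1) ≠ 0 := pow_ne_zero _ hz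
  apply mul_right_cancel₀ hz1
  have lhs : (1 + z⁻¹) * (z + z⁻¹) ^ γ * z ^ (γ + 1) = (1 + z) * (z ^ 2 + 1) ^ γ := by
    rw [pow_succ, show (1 + z⁻¹) * (z + z⁻¹) ^ γ * (z ^ γ * z) = ((1 + z⁻¹) * z) * ((z + z⁻¹) * z) ^ γ by rw [mul_pow]; ring,
      show (1 + z⁻¹) * z = 1 + z by rw [add_mul, inv_mul_cancel₀ hz]; ring,
      show (z + z⁻¹) * z = z ^ 2 + 1 by rw [add_mul, inv_mul_cancel₀ hz]; ring]
  rw [lhs, key γ z, Finset.sum_mul]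
  apply Finset.sum_congr rfl
  intro α hα
  have hαγ : α ≤ γ := by
    have := Finset.mem_range.mp hα; omega
  rw [mul_assoc]
  congr 1
  rw [add_mul]
  congr 1
  · rw [← zpow_natCast z (γ + 1), ← zpow_add₀ hz, ← zpow_natCast z (γ + 1 + α)]
    congr 1
    push_cast
    ring
  · rw [← zpow_natCast z (γ + 1), ← zpow_add₀ hz, ← zpow_natCast z (γ - α)]
    congr 1
    push_cast [Nat.cast_sub hαγ]
    ring
end

section
/- For r ≥ 1, one has the inversion formula 1/(1−t)^r = (1/(r−1)!) · Σ_{k=1}^{r} c(r−1, k−1) · P_{k−1}(t)/(1−t)^k, where c(n,k) is the unsigned Stirling number of the first kind and P_{k−1} the Eulerian polynomial; equivalently, as a polynomial identity, Σ_{k=1}^{r} c(r−1,k−1) · P_{k−1}(t) · (1−t)^{r−k} = (r−1)!. -/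
/-- Unsigned Stirling numbers of the first kind: `stirling1 n k` counts
permutations of `n` elements with `k` cycles. -/
def stirling1 : ℕ → ℕ → ℕ
  | 0, 0 => 1
  | 0, _ + 1 => 0
  | _ + 1, 0 => 0
  | n + 1, k + 1 => n * stirling1 n (k + 1) + stirling1 n k

lemma stirling1_eq_zero : ∀ n k : ℕ, n < k → stirling1 n k = 0
  | 0, _ + 1, _ => rfl
  | n + 1, k + 1, h => by
    rw [stirling1, stirling1_eq_zero n (k+1) (by omega), stirling1_eq_zero n k (by omega)]
    simp

lemma stirling1_sum_pow (d m : ℕ) :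
    ∑ j ∈ Finset.range (d + 1), stirling1 d j * m ^ j = Nat.ascFactorial m d := by
  induction d with
  | zero => simp [stirling1]
  | succ d ih =>
    have h0 : ∑ j ∈ Finset.range (d + 1 + 1), stirling1 (d+1) j * m ^ j
        = ∑ j ∈ Finset.range (d + 1), stirling1 (d+1) (j+1) * m ^ (j+1) := by
      rw [Finset.sum_range_succ']
      simp [stirling1]
    have h1 : ∑ j ∈ Finset.range (d + 1), stirling1 d (j+1) * m ^ (j+1) + stirling1 d 0
        = ∑ j ∈ Finset.range (d + 1), stirling1 d j * m ^ j := by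
      have e1 := Finset.sum_range_succ' (fun j => stirling1 d j * m ^ j) (d + 1)
      have e2 := Finset.sum_range_succ (fun j => stirling1 d j * m ^ j) (d + 1)
      simp only [stirling1_eq_zero d (d+1) (by omega), pow_zero, mul_one, zero_mul,
        add_zero] at e1 e2
      omega
    have h2 : d * (∑ j ∈ Finset.range (d + 1), stirling1 d (j+1) * m ^ (j+1))
        = d * ∑ j ∈ Finset.range (d + 1), stirling1 d j * m ^ j := by
      rcases d with _ | e
      · simp
      · have h0' : stirling1 (e+1) 0 = 0 := rfl
        rw [h0', add_zero] at h1
        rw [h1]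
    have expand : ∀ j, stirling1 (d+1) (j+1) * m ^ (j+1)
        = d * (stirling1 d (j+1) * m ^ (j+1)) + m * (stirling1 d j * m ^ j) := by
      intro j
      show (d * stirling1 d (j+1) + stirling1 d j) * m ^ (j+1) = _
      ring
    rw [h0, Finset.sum_congr rfl (fun j _ => expand j), Finset.sum_add_distrib,
      ← Finset.mul_sum, ← Finset.mul_sum, h2, ih, Nat.ascFactorial_succ]
    ring
open PowerSeries

section
open PowerSeries
lemma key_mk (d : ℕ) :
    (PowerSeries.mk (fun m => if m = 0 then 0 else ((Nat.ascFactorial m d : ℕ) : ℚ)) : ℚ⟦X⟧)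
      = PowerSeries.C ((Nat.factorial d : ℕ) : ℚ) *
        (PowerSeries.X * PowerSeries.mk (fun n => ((Nat.choose (d + n) d : ℕ) : ℚ))) := by
  ext m
  rcases m with _ | n
  · simp
  · rw [coeff_C_mul, coeff_succ_X_mul, coeff_mk, coeff_mk]
    simp [Nat.ascFactorial_eq_factorial_mul_choose, Nat.add_comm d n]

lemma key_s4 (d : ℕ) :
    (1 - PowerSeries.X : ℚ⟦X⟧) ^ (d + 1) *
      PowerSeries.mk (fun m => if m = 0 then 0 else ((Nat.ascFactorial m d : ℕ) : ℚ))
    = PowerSeries.X * PowerSeries.C ((Nat.factorial d : ℕ) : ℚ) := by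
  rw [key_mk]
  have h := PowerSeries.mk_add_choose_mul_one_sub_pow_eq_one ℚ d
  calc (1 - PowerSeries.X : ℚ⟦X⟧) ^ (d + 1) * (PowerSeries.C ((Nat.factorial d : ℕ) : ℚ) *
        (PowerSeries.X * PowerSeries.mk (fun n => ((Nat.choose (d + n) d : ℕ) : ℚ))))
      = PowerSeries.X * PowerSeries.C ((Nat.factorial d : ℕ) : ℚ) *
        ((PowerSeries.mk (fun n => ((Nat.choose (d + n) d : ℕ) : ℚ))) *
          (1 - PowerSeries.X : ℚ⟦X⟧) ^ (d + 1)) := by ring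
    _ = PowerSeries.X * PowerSeries.C ((Nat.factorial d : ℕ) : ℚ) := by rw [h, mul_one]
end

/-- Inversion formula: for `r ≥ 1`,
`1/(1−t)^r = (1/(r−1)!)·Σ_{k=1}^{r} c(r−1,k−1)·P_{k−1}(t)/(1−t)^k`, in the
cleared-denominator polynomial form
`Σ_{k=1}^{r} c(r−1,k−1)·P_{k−1}(t)·(1−t)^{r−k} = (r−1)!`, where `c` denotes
unsigned Stirling numbers of the first kind and `P_{k−1}` the Eulerian polynomials
(characterized by `Σ_{m≥1} m^{k−1} t^m = t·P_{k−1}(t)/(1−t)^k` as power series). -/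
theorem stirling_eulerian_inversion (P : ℕ → Polynomial ℚ)
    (hP : ∀ n : ℕ,
      (1 - PowerSeries.X : PowerSeries ℚ) ^ (n + 1) *
          PowerSeries.mk (fun m => if m = 0 then 0 else (m : ℚ) ^ n) =
        PowerSeries.X * (P n : PowerSeries ℚ)) :
    ∀ r : ℕ, 1 ≤ r →
      ∑ k ∈ Finset.Icc 1 r,
          Polynomial.C ((stirling1 (r - 1) (k - 1) : ℕ) : ℚ) * P (k - 1) *
            (1 - Polynomial.X) ^ (r - k) =
        Polynomial.C ((Nat.factorial (r - 1) : ℕ) : ℚ) := by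
  intro r hr
  obtain ⟨d, rfl⟩ : ∃ d, r = d + 1 := ⟨r - 1, by omega⟩
  rw [← Finset.Ico_add_one_right_eq_Icc, Finset.sum_Ico_eq_sum_range]
  simp only [show ∀ i : ℕ, 1 + i - 1 = i from fun i => by omega,
    show ∀ i : ℕ, d + 1 - (1 + i) = d - i from fun i => by omega,
    show d + 1 - 1 = d from rfl, show d + 1 + 1 - 1 = d + 1 from rfl]
  rw [← Polynomial.coe_inj]
  have hcast : ((∑ i ∈ Finset.range (d + 1), Polynomial.C ((stirling1 d i : ℕ) : ℚ) * P i *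
        (1 - Polynomial.X) ^ (d - i) : Polynomial ℚ) : ℚ⟦X⟧)
      = ∑ i ∈ Finset.range (d + 1), PowerSeries.C ((stirling1 d i : ℕ) : ℚ) *
          (P i : ℚ⟦X⟧) * (1 - PowerSeries.X) ^ (d - i) := by
    rw [← Polynomial.coeToPowerSeries.ringHom_apply, map_sum]
    refine Finset.sum_congr rfl fun i _ => ?_
    simp only [Polynomial.coeToPowerSeries.ringHom_apply, Polynomial.coe_mul,
      Polynomial.coe_pow, Polynomial.coe_sub, Polynomial.coe_one, Polynomial.coe_X,
      Polynomial.coe_C]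
  rw [hcast, Polynomial.coe_C]
  apply mul_left_cancel₀ (PowerSeries.X_ne_zero : (PowerSeries.X : ℚ⟦X⟧) ≠ 0)
  rw [Finset.mul_sum]
  have hterm : ∀ i ∈ Finset.range (d + 1),
      PowerSeries.X * (PowerSeries.C ((stirling1 d i : ℕ) : ℚ) * (P i : ℚ⟦X⟧) *
          (1 - PowerSeries.X) ^ (d - i))
        = (1 - PowerSeries.X : ℚ⟦X⟧) ^ (d + 1) *
            (PowerSeries.C ((stirling1 d i : ℕ) : ℚ) *
              PowerSeries.mk (fun m => if m = 0 then 0 else (m : ℚ) ^ i)) := by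
    intro i hi
    have hx : PowerSeries.X * (P i : ℚ⟦X⟧)
        = (1 - PowerSeries.X : ℚ⟦X⟧) ^ (i + 1) *
            PowerSeries.mk (fun m => if m = 0 then 0 else (m : ℚ) ^ i) := (hP i).symm
    have hpow : (1 - PowerSeries.X : ℚ⟦X⟧) ^ (i + 1) * (1 - PowerSeries.X) ^ (d - i)
        = (1 - PowerSeries.X) ^ (d + 1) := by
      rw [← pow_add]
      congr 1
      have : i < d + 1 := Finset.mem_range.mp hi
      omega
    calc PowerSeries.X * (PowerSeries.C ((stirling1 d i : ℕ) : ℚ) * (P i : ℚ⟦X⟧) *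
          (1 - PowerSeries.X) ^ (d - i))
        = PowerSeries.C ((stirling1 d i : ℕ) : ℚ) * (PowerSeries.X * (P i : ℚ⟦X⟧)) *
            (1 - PowerSeries.X) ^ (d - i) := by ring
      _ = (1 - PowerSeries.X : ℚ⟦X⟧) ^ (i + 1) * (1 - PowerSeries.X) ^ (d - i) *
            (PowerSeries.C ((stirling1 d i : ℕ) : ℚ) *
              PowerSeries.mk (fun m => if m = 0 then 0 else (m : ℚ) ^ i)) := by rw [hx]; ring
      _ = _ := by rw [hpow]
  rw [Finset.sum_congr rfl hterm, ← Finset.mul_sum]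
  have hsum : ∑ i ∈ Finset.range (d + 1), PowerSeries.C ((stirling1 d i : ℕ) : ℚ) *
        PowerSeries.mk (fun m => if m = 0 then 0 else (m : ℚ) ^ i)
      = PowerSeries.mk (fun m => if m = 0 then 0 else ((Nat.ascFactorial m d : ℕ) : ℚ)) := by
    ext m
    rw [map_sum, coeff_mk]
    simp only [coeff_C_mul, coeff_mk]
    by_cases hm : m = 0
    · simp [hm]
    · simp only [if_neg hm, ← stirling1_sum_pow d m]
      push_cast
      rfl
  rw [hsum, key_s4 d]
end

section
/- For every t ∈ ℕ and fixed k, r ∈ ℕ: U_{t,k,r}(a;q) = Σ_{λ ⊢ t} Π_{s=1}^{t} (1/m_{λ,s}!) · ((−1)^{s+1} · U_{sk,sr}(a;q) / s)^{m_{λ,s}}, where the sum runs over all partitions λ of t and m_{λ,s} is the multiplicity of the part s in λ. In particular, U_{t,k,r}(a;q) is an isobaric polynomial of degree t in U_{k,r}, U_{2k,2r}, …, U_{tk,tr}. -/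
open PowerSeries

namespace MacMahonU

variable {A : Type*} [CommRing A] [Algebra ℚ A] {ι : Type*}
  (x : ι → A) (S : Finset ι)

noncomputable def Esym (n : ℕ) : A := ∑ T ∈ S.powersetCard n, ∏ i ∈ T, x i

noncomputable def Psum (n : ℕ) : A := ∑ i ∈ S, x i ^ n

noncomputable def cc (s : ℕ) : A := (((-1:ℚ) ^ (s+1)) / (s : ℚ)) • Psum x S s

noncomputable def pf (m : Multiset ℕ) (s : ℕ) : A :=
  ((1:ℚ) / (Nat.factorial (m.count s) : ℚ)) • (cc x S s) ^ (m.count s)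

noncomputable def B (t : ℕ) : A :=
  ∑ p : Nat.Partition t, ∏ s ∈ Finset.Icc 1 t, pf x S p.parts s

lemma aeval_esymm (n : ℕ) :
    MvPolynomial.aeval (x ∘ Subtype.val) (MvPolynomial.esymm {i // i ∈ S} ℚ n) = Esym x S n := by
  refine (MvPolynomial.aeval_esymm_eq_multiset_esymm {i // i ∈ S} ℚ (S := A) n
    (x ∘ Subtype.val)).trans ?_
  have h : ((Finset.univ : Finset {i // i ∈ S}).val.map (x ∘ Subtype.val) : Multiset A) = S.val.map x := by
    rw [Finset.univ_eq_attach]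
    have : (S.attach.val : Multiset {i // i ∈ S}) = S.val.attach := rfl
    rw [this, ← Multiset.map_map, Multiset.attach_map_val]
  rw [h, Finset.esymm_map_val]
  rfl

lemma aeval_psum (n : ℕ) :
    MvPolynomial.aeval (x ∘ Subtype.val) (MvPolynomial.psum {i // i ∈ S} ℚ n) = Psum x S n := by
  simp only [MvPolynomial.psum, map_sum, map_pow, MvPolynomial.aeval_X, Function.comp]
  rw [Finset.univ_eq_attach, Psum, ← Finset.sum_attach S (fun i => x i ^ n)]

lemma newton (t : ℕ) :
    (t : A) * Esym x S t =
      ∑ s ∈ Finset.Icc 1 t, (-1 : A) ^ (s+1) * (Psum x S s * Esym x S (t - s)) := by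
  have h := congrArg (MvPolynomial.aeval (x ∘ Subtype.val))
    (MvPolynomial.mul_esymm_eq_sum {i // i ∈ S} ℚ t)
  simp only [map_mul, map_natCast, map_sum, map_pow, map_neg, map_one,
    aeval_esymm, aeval_psum] at h
  rw [h]
  rw [Finset.sum_filter, Finset.Nat.sum_antidiagonal_eq_sum_range_succ_mk]
  have hrange : ∑ k ∈ Finset.range (t+1),
      (if k < t then (-1:A)^k * Esym x S k * Psum x S (t - k) else 0) =
      ∑ k ∈ Finset.range t, (-1:A)^k * Esym x S k * Psum x S (t - k) := by
    rw [Finset.sum_range_succ, if_neg (lt_irrefl t), add_zero]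
    exact Finset.sum_congr rfl fun k hk => if_pos (Finset.mem_range.mp hk)
  rw [hrange, Finset.mul_sum]
  refine Finset.sum_nbij' (fun k => t - k) (fun s => t - s) ?_ ?_ ?_ ?_ ?_
  · intro k hk
    simp only [Finset.mem_range] at hk
    simp only [Finset.mem_Icc]
    omega
  · intro s hs
    simp only [Finset.mem_Icc] at hs
    simp only [Finset.mem_range]
    omega
  · intro k hk; simp only [Finset.mem_range] at hk; show t - (t - k) = k; omega
  · intro s hs; simp only [Finset.mem_Icc] at hs; show t - (t - s) = s; omega
  · intro k hk
    simp only [Finset.mem_range] at hk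
    have h1 : t - (t - k) = k := by omega
    rw [h1]
    have h2 : (-1:A)^(t+1) * ((-1:A)^k * Esym x S k * Psum x S (t-k)) =
        (-1:A)^((t+1)+k) * (Psum x S (t-k) * Esym x S k) := by rw [pow_add]; ring
    rw [h2]
    congr 1
    rw [neg_one_pow_eq_pow_mod_two, neg_one_pow_eq_pow_mod_two (n := (t-k)+1)]
    congr 1
    omega



lemma mem_le_sum {m : Multiset ℕ} {u : ℕ} (hu : u ∈ m) : u ≤ m.sum := by
  obtain ⟨m', rfl⟩ := Multiset.exists_cons_of_mem hu
  rw [Multiset.sum_cons]; omega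

lemma parts_mem_Icc {t : ℕ} (p : Nat.Partition t) {s : ℕ} (hs : s ∈ p.parts) :
    s ∈ Finset.Icc 1 t := by
  rw [Finset.mem_Icc]
  exact ⟨p.parts_pos hs, p.parts_sum ▸ mem_le_sum hs⟩

lemma sum_count_parts {t : ℕ} (p : Nat.Partition t) :
    ∑ s ∈ Finset.Icc 1 t, s * p.parts.count s = t := by
  have h0 : ∑ s ∈ p.parts.toFinset, p.parts.count s • s = p.parts.sum :=
    (Finset.sum_multiset_count p.parts).symm
  have hsub : p.parts.toFinset ⊆ Finset.Icc 1 t := fun s hs =>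
    parts_mem_Icc p (Multiset.mem_toFinset.mp hs)
  have h1 : ∑ s ∈ Finset.Icc 1 t, p.parts.count s • s = p.parts.sum := by
    rw [← h0]
    exact (Finset.sum_subset hsub (fun s _ hs => by
      rw [Multiset.count_eq_zero_of_notMem (fun h => hs (Multiset.mem_toFinset.mpr h)),
        zero_smul])).symm
  calc ∑ s ∈ Finset.Icc 1 t, s * p.parts.count s
      = ∑ s ∈ Finset.Icc 1 t, p.parts.count s • s :=
        Finset.sum_congr rfl fun s _ => by rw [smul_eq_mul, mul_comm]
    _ = p.parts.sum := h1
    _ = t := p.parts_sum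

lemma pf_count_zero (m : Multiset ℕ) (s : ℕ) (h : m.count s = 0) : pf x S m s = 1 := by
  simp [pf, h]

lemma step_smul {s : ℕ} (m : Multiset ℕ) (hm : s ∈ m) :
    ((m.count s : ℚ)) • pf x S m s = cc x S s * pf x S (m.erase s) s := by
  have hj : m.count s = (m.erase s).count s + 1 := by
    rw [Multiset.count_erase_self]
    have : 1 ≤ m.count s := Multiset.one_le_count_iff_mem.mpr hm
    omega
  set j := (m.erase s).count s with hjdef
  rw [pf, pf, hj, ← hjdef]
  rw [smul_smul, pow_succ']  -- c^(j+1) = c * c^j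
  rw [mul_smul_comm]
  congr 1
  rw [Nat.factorial_succ]
  have h1 : ((j:ℚ)+1) ≠ 0 := by positivity
  have h2 : (Nat.factorial j : ℚ) ≠ 0 := Nat.cast_ne_zero.mpr (Nat.factorial_ne_zero j)
  push_cast
  field_simp

lemma step_prod {s : ℕ} (m : Multiset ℕ) (hm : s ∈ m) {Ufin : Finset ℕ} (hsU : s ∈ Ufin) :
    ((m.count s : ℚ)) • ∏ u ∈ Ufin, pf x S m u =
      cc x S s * ∏ u ∈ Ufin, pf x S (m.erase s) u := by
  rw [← Finset.mul_prod_erase Ufin _ hsU, ← Finset.mul_prod_erase Ufin _ hsU]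
  have hrest : ∏ u ∈ Ufin.erase s, pf x S m u = ∏ u ∈ Ufin.erase s, pf x S (m.erase s) u :=
    Finset.prod_congr rfl fun u hu => by
      rw [pf, pf, Multiset.count_erase_of_ne (Finset.ne_of_mem_erase hu)]
  rw [← smul_mul_assoc, step_smul x S m hm, hrest, mul_assoc]

lemma erase_sum {t s : ℕ} (p : Nat.Partition t) (hm : s ∈ p.parts) :
    (p.parts.erase s).sum = t - s := by
  have h := Multiset.cons_erase hm
  have : s + (p.parts.erase s).sum = t := by
    rw [← Multiset.sum_cons, h, p.parts_sum]
  omega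

lemma erase_range {t s : ℕ} (p : Nat.Partition t) (hs : s ∈ Finset.Icc 1 t)
    (hm : s ∈ p.parts) :
    ∏ u ∈ Finset.Icc 1 t, pf x S (p.parts.erase s) u =
      ∏ u ∈ Finset.Icc 1 (t - s), pf x S (p.parts.erase s) u := by
  refine (Finset.prod_subset (Finset.Icc_subset_Icc le_rfl (Nat.sub_le t s)) ?_).symm
  intro u hu hnot
  refine pf_count_zero x S _ u (Multiset.count_eq_zero_of_notMem fun hmem => ?_)
  have h1 := mem_le_sum hmem
  rw [erase_sum p hm] at h1
  simp only [Finset.mem_Icc] at hu hnot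
  omega

lemma Brec {t : ℕ} (ht : 1 ≤ t) :
    (t : A) * B x S t =
      ∑ s ∈ Finset.Icc 1 t, (-1 : A) ^ (s+1) * (Psum x S s * B x S (t - s)) := by
  classical
  have halg : ∀ (q : ℚ) (y : A), q • y = algebraMap ℚ A q * y := fun q y => Algebra.smul_def q y
  rw [B, Finset.mul_sum]
  have hterm : ∀ p : Nat.Partition t,
      (t : A) * ∏ s ∈ Finset.Icc 1 t, pf x S p.parts s =
      ∑ s ∈ Finset.Icc 1 t,
        ((s * p.parts.count s : ℕ) : ℚ) • ∏ u ∈ Finset.Icc 1 t, pf x S p.parts u := by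
    intro p
    rw [← Finset.sum_smul]
    have : ∑ s ∈ Finset.Icc 1 t, ((s * p.parts.count s : ℕ) : ℚ) = (t : ℚ) := by
      rw [← Nat.cast_sum, sum_count_parts p]
    rw [this, halg]
    norm_num
  rw [Finset.sum_congr rfl fun p _ => hterm p, Finset.sum_comm]
  refine Finset.sum_congr rfl fun s hs => ?_
  obtain ⟨hs1, hst⟩ := Finset.mem_Icc.mp hs
  have hfilter : ∑ p : Nat.Partition t,
      ((s * p.parts.count s : ℕ) : ℚ) • ∏ u ∈ Finset.Icc 1 t, pf x S p.parts u =
      ∑ p ∈ Finset.univ.filter (fun p : Nat.Partition t => s ∈ p.parts),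
        ((s * p.parts.count s : ℕ) : ℚ) • ∏ u ∈ Finset.Icc 1 t, pf x S p.parts u := by
    refine (Finset.sum_filter_of_ne fun p _ hne => ?_).symm
    by_contra hmem
    rw [Multiset.count_eq_zero_of_notMem hmem] at hne
    simp at hne
  rw [hfilter]
  have hstep : ∀ p ∈ Finset.univ.filter (fun p : Nat.Partition t => s ∈ p.parts),
      ((s * p.parts.count s : ℕ) : ℚ) • ∏ u ∈ Finset.Icc 1 t, pf x S p.parts u =
      (s : ℚ) • (cc x S s * ∏ u ∈ Finset.Icc 1 (t - s), pf x S (p.parts.erase s) u) := by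
    intro p hp
    have hmem : s ∈ p.parts := (Finset.mem_filter.mp hp).2
    rw [Nat.cast_mul, mul_smul, step_prod x S p.parts hmem hs, erase_range x S p hs hmem]
  rw [Finset.sum_congr rfl hstep]
  have hbij : ∑ p ∈ Finset.univ.filter (fun p : Nat.Partition t => s ∈ p.parts),
      (s : ℚ) • (cc x S s * ∏ u ∈ Finset.Icc 1 (t - s), pf x S (p.parts.erase s) u) =
      ∑ q : Nat.Partition (t - s),
      (s : ℚ) • (cc x S s * ∏ u ∈ Finset.Icc 1 (t - s), pf x S q.parts u) := by
    refine Finset.sum_bij'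
      (fun p hp => ⟨p.parts.erase s,
        fun {i} hi => p.parts_pos (Multiset.mem_of_mem_erase hi),
        erase_sum p (Finset.mem_filter.mp hp).2⟩)
      (fun q _ => ⟨s ::ₘ q.parts,
        fun {i} hi => by
          rcases Multiset.mem_cons.mp hi with h | h
          · omega
          · exact q.parts_pos h,
        by rw [Multiset.sum_cons, q.parts_sum]; omega⟩)
      ?_ ?_ ?_ ?_ ?_
    · intro p hp; exact Finset.mem_univ _
    · intro q hq
      simp only [Finset.mem_filter, Finset.mem_univ, true_and]
      exact Multiset.mem_cons_self s q.parts
    · intro p hp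
      ext1
      exact Multiset.cons_erase (Finset.mem_filter.mp hp).2
    · intro q hq
      ext1
      exact Multiset.erase_cons_head s q.parts
    · intro p hp; rfl
  rw [hbij, ← Finset.smul_sum, ← Finset.mul_sum, ← B]
  have hs0 : (s : ℚ) ≠ 0 := Nat.cast_ne_zero.mpr (by omega)
  have hdiv : (s : ℚ) * ((-1:ℚ) ^ (s+1) / (s:ℚ)) = (-1:ℚ) ^ (s+1) := by field_simp
  have hc : (s : ℚ) • cc x S s = (-1:A)^(s+1) * Psum x S s := by
    rw [cc, smul_smul, hdiv, halg]
    congr 1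
    rw [map_pow, map_neg, map_one]
  rw [← smul_mul_assoc, hc, mul_assoc]

lemma esymm_eq_B (t : ℕ) : Esym x S t = B x S t := by
  induction t using Nat.strong_induction_on with
  | _ t ih =>
    match t with
    | 0 =>
      rw [Esym, B]
      simp only [Finset.powersetCard_zero, Finset.sum_singleton, Finset.prod_empty]
      have : Finset.Icc 1 0 = (∅ : Finset ℕ) := by simp
      rw [Fintype.sum_unique]
      simp [this]
    | (t+1) =>
      have ht : 1 ≤ t + 1 := Nat.le_add_left 1 t
      have hE := newton x S (t+1)
      have hB := Brec x S (ht := ht)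
      have hIH : ∀ s ∈ Finset.Icc 1 (t+1), Esym x S (t+1-s) = B x S (t+1-s) := by
        intro s hs
        obtain ⟨h1, h2⟩ := Finset.mem_Icc.mp hs
        exact ih (t+1-s) (by omega)
      rw [Finset.sum_congr rfl fun s hs => by rw [hIH s hs]] at hE
      have key : ((t+1 : ℕ) : ℚ) • Esym x S (t+1) = ((t+1 : ℕ) : ℚ) • B x S (t+1) := by
        rw [Algebra.smul_def, Algebra.smul_def, map_natCast, hE, hB]
      have h0 : ((t : ℚ) + 1) ≠ 0 := by positivity
      have h2 := congrArg (fun y : A => (((t+1 : ℕ) : ℚ))⁻¹ • y) key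
      simpa [smul_smul, inv_mul_cancel₀ h0] using h2

section PS

open PowerSeries

noncomputable def Finv (a : ℚ) (n : ℕ) : PowerSeries ℚ :=
  (1 + PowerSeries.C (R := ℚ) a * PowerSeries.X ^ n + PowerSeries.X ^ (2*n))⁻¹

noncomputable def FF (a : ℚ) (k r n : ℕ) : PowerSeries ℚ :=
  PowerSeries.X ^ (r*n) * (Finv a n) ^ k

lemma prod_FF (a : ℚ) (k r : ℕ) (T : Finset ℕ) :
    ∏ n ∈ T, FF a k r n =
      PowerSeries.X ^ (r * T.sum id) * ∏ n ∈ T, (Finv a n) ^ k := by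
  simp only [FF, Finset.prod_mul_distrib]
  congr 1
  rw [Finset.prod_pow_eq_pow_sum, Finset.mul_sum]
  rfl

/-- Coefficient below the order of a leading `X` power vanishes. -/
lemma coeff_X_pow_mul_zero {j m : ℕ} (h : m < j) (g : PowerSeries ℚ) :
    PowerSeries.coeff (R := ℚ) m (PowerSeries.X ^ j * g) = 0 := by
  rw [PowerSeries.coeff_mul]
  refine Finset.sum_eq_zero fun ij hij => ?_
  have hm := Finset.HasAntidiagonal.mem_antidiagonal.mp hij
  rw [PowerSeries.coeff_X_pow, if_neg (by omega), zero_mul]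

lemma coeff_FF_pow_zero (a : ℚ) {k r s n m : ℕ} (hr : 1 ≤ r) (hs : 1 ≤ s)
    (hn : m < n) : PowerSeries.coeff (R := ℚ) m ((FF a k r n) ^ s) = 0 := by
  rw [FF, mul_pow, ← pow_mul]
  have h2 : n ≤ r * n * s :=
    calc n = 1 * n * 1 := by ring
    _ ≤ r * n * s := Nat.mul_le_mul (Nat.mul_le_mul hr le_rfl) hs
  exact coeff_X_pow_mul_zero (by omega) _

lemma coeff_prod_FF_zero (a : ℚ) {k r m : ℕ} (hr : 1 ≤ r) {T : Finset ℕ} {n : ℕ}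
    (hn : n ∈ T) (hm : m < n) :
    PowerSeries.coeff (R := ℚ) m (∏ i ∈ T, FF a k r i) = 0 := by
  rw [prod_FF]
  have h1 : n ≤ T.sum id := Finset.single_le_sum (fun i _ => Nat.zero_le (id i)) hn
  have h2 : T.sum id ≤ r * T.sum id := Nat.le_mul_of_pos_left _ (by omega)
  exact coeff_X_pow_mul_zero (by omega) _

/-- `Ceq N f g` : the power series agree in degrees `≤ N`. -/
def Ceq (N : ℕ) (f g : PowerSeries ℚ) : Prop :=
  ∀ m ≤ N, PowerSeries.coeff (R := ℚ) m f = PowerSeries.coeff (R := ℚ) m g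

lemma Ceq.mul {N : ℕ} {f f' g g' : PowerSeries ℚ} (hf : Ceq N f f') (hg : Ceq N g g') :
    Ceq N (f * g) (f' * g') := by
  intro m hm
  rw [PowerSeries.coeff_mul, PowerSeries.coeff_mul]
  refine Finset.sum_congr rfl fun ij hij => ?_
  have h := Finset.HasAntidiagonal.mem_antidiagonal.mp hij
  rw [hf ij.1 (by omega), hg ij.2 (by omega)]

lemma Ceq.pow {N : ℕ} {f f' : PowerSeries ℚ} (hf : Ceq N f f') (n : ℕ) :
    Ceq N (f ^ n) (f' ^ n) := by
  induction n with
  | zero => intro m hm; rfl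
  | succ n ih => rw [pow_succ, pow_succ]; exact ih.mul hf

lemma Ceq.smul {N : ℕ} {f f' : PowerSeries ℚ} (hf : Ceq N f f') (q : ℚ) :
    Ceq N (q • f) (q • f') := by
  intro m hm
  rw [map_smul, map_smul, hf m hm]

lemma Ceq.prod {N : ℕ} {ι : Type*} (T : Finset ι) (f g : ι → PowerSeries ℚ)
    (h : ∀ i ∈ T, Ceq N (f i) (g i)) : Ceq N (T.prod f) (T.prod g) := by
  classical
  induction T using Finset.induction_on with
  | empty => intro m hm; rfl
  | insert _ _ ha ih =>
    rename_i b T'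
    rw [Finset.prod_insert ha, Finset.prod_insert ha]
    exact (h b (Finset.mem_insert_self b T')).mul
      (ih fun i hi => h i (Finset.mem_insert_of_mem hi))

lemma Ceq.sum {N : ℕ} {ι : Type*} (T : Finset ι) (f g : ι → PowerSeries ℚ)
    (h : ∀ i ∈ T, Ceq N (f i) (g i)) : Ceq N (T.sum f) (T.sum g) := by
  intro m hm
  rw [map_sum, map_sum]
  exact Finset.sum_congr rfl fun i hi => h i hi m hm


end PS

end MacMahonU

/-- `U a t k r` is the MacMahon-type series
`U_{t,k,r}(a;q) = Σ_{1≤n₁<⋯<n_t} q^{r(n₁+⋯+n_t)} / Π_j (1+a q^{n_j}+q^{2n_j})^k`,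
a formal power series in `q` over `ℚ`.  The sum over strictly increasing tuples is
realized as a sum over `t`-element finsets of positive integers; since (for `r ≥ 1`)
the term attached to a finset `s` has `q`-order `r·(Σ s) > N` whenever `s` contains
an element `> N`, the `q^N`-coefficient is computed from the finite truncation to
finsets contained in `{1,…,N}`. -/
noncomputable def U (a : ℚ) (t k r : ℕ) : PowerSeries ℚ :=
  PowerSeries.mk fun N =>
    PowerSeries.coeff (R := ℚ) N
      (∑ s ∈ Finset.powersetCard t (Finset.Icc 1 N),
        PowerSeries.X ^ (r * s.sum id) *
          ∏ n ∈ s,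
            ((1 + PowerSeries.C (R := ℚ) a * PowerSeries.X ^ n + PowerSeries.X ^ (2 * n))⁻¹) ^ k)

namespace MacMahonU

open PowerSeries

lemma coeff_U (a : ℚ) (t k r N : ℕ) :
    PowerSeries.coeff (R := ℚ) N (U a t k r) =
      PowerSeries.coeff (R := ℚ) N (Esym (FF a k r) (Finset.Icc 1 N) t) := by
  rw [U, coeff_mk]
  refine congrArg _ (Finset.sum_congr rfl fun T _ => ?_)
  rw [prod_FF a k r T]
  rfl

lemma coeff_U1 {a : ℚ} {k r s : ℕ} (N : ℕ) (hr : 1 ≤ r) (hs : 1 ≤ s) :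
    Ceq N (U a 1 (s*k) (s*r)) (Psum (FF a k r) (Finset.Icc 1 N) s) := by
  intro m hm
  rw [U, coeff_mk]
  have h1 : (∑ T ∈ Finset.powersetCard 1 (Finset.Icc 1 m),
      PowerSeries.X ^ ((s*r) * T.sum id) *
        ∏ n ∈ T, ((1 + PowerSeries.C (R := ℚ) a * PowerSeries.X ^ n +
          PowerSeries.X ^ (2 * n))⁻¹) ^ (s*k)) =
      ∑ n ∈ Finset.Icc 1 m, (FF a k r n) ^ s := by
    rw [Finset.powersetCard_one, Finset.sum_map]
    refine Finset.sum_congr rfl fun n _ => ?_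
    simp only [Function.Embedding.coeFn_mk, Finset.sum_singleton, Finset.prod_singleton,
      id_eq]
    rw [FF, mul_pow, ← pow_mul, ← pow_mul, show r*n*s = s*r*n by ring,
      show k*s = s*k by ring]
    rfl
  rw [h1, Psum, map_sum, map_sum]
  refine Finset.sum_subset (Finset.Icc_subset_Icc le_rfl hm) fun n hn hnot => ?_
  simp only [Finset.mem_Icc] at hn hnot
  exact coeff_FF_pow_zero a hr hs (by omega)

end MacMahonU

/-- `U_{t,k,r}(a;q) = Σ_{λ⊢t} Π_{s=1}^{t} (1/m_{λ,s}!)·((−1)^{s+1}·U_{sk,sr}(a;q)/s)^{m_{λ,s}}`,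
the sum ranging over all partitions `λ` of `t`, with `m_{λ,s}` the multiplicity of
the part `s` in `λ`. -/
theorem U_isobaric_partition_formula (a : ℚ) (t k r : ℕ) (hk : 1 ≤ k) (hr : 1 ≤ r) :
    U a t k r =
      ∑ p : Nat.Partition t, ∏ s ∈ Finset.Icc 1 t,
        ((1 : ℚ) / (Nat.factorial (Multiset.count s p.parts) : ℚ)) •
          ((((-1 : ℚ) ^ (s + 1)) / (s : ℚ)) • U a 1 (s * k) (s * r)) ^
            (Multiset.count s p.parts) := by
  open MacMahonU in
  ext N
  rw [MacMahonU.coeff_U a t k r N, MacMahonU.esymm_eq_B (MacMahonU.FF a k r) (Finset.Icc 1 N) t]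
  have hc : MacMahonU.Ceq N
      (∑ p : Nat.Partition t, ∏ s ∈ Finset.Icc 1 t,
        ((1 : ℚ) / (Nat.factorial (Multiset.count s p.parts) : ℚ)) •
          ((((-1 : ℚ) ^ (s + 1)) / (s : ℚ)) • U a 1 (s * k) (s * r)) ^
            (Multiset.count s p.parts))
      (MacMahonU.B (MacMahonU.FF a k r) (Finset.Icc 1 N) t) := by
    refine MacMahonU.Ceq.sum _ _ _ fun p _ => ?_
    refine MacMahonU.Ceq.prod _ _ _ fun s hs => ?_
    have hs1 : 1 ≤ s := (Finset.mem_Icc.mp hs).1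
    have h1 : MacMahonU.Ceq N ((((-1 : ℚ) ^ (s + 1)) / (s : ℚ)) • U a 1 (s * k) (s * r))
        (MacMahonU.cc (MacMahonU.FF a k r) (Finset.Icc 1 N) s) :=
      (MacMahonU.coeff_U1 N hr hs1).smul _
    exact (h1.pow _).smul _
  exact (hc N le_rfl).symm
end

section
/- Let t, k ∈ ℕ, let r ∈ ℕ, and let a be a scalar. Then q^{−r·t(t+1)/2} · U_{t,k,r}(a;q) agrees with the infinite product Π_{n≥1} 1/((1−q^{rn})·(1+a qⁿ+q^{2n})^k) in all q-power coefficients up to and including q^t; i.e., U_{t,k,r}(a;q) = q^{r t(t+1)/2} · Π_{n≥1} (1−q^{rn})^{−1}(1+a qⁿ+q^{2n})^{−k} + O(q^{r t(t+1)/2 + t + 1}). -/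
open PowerSeries

/-- The infinite product `Π_{n≥1} 1/((1−q^{rn})·(1+a qⁿ+q^{2n})^k)`, defined
coefficient-wise via truncation (the factor for `n` is `1 + O(qⁿ)`). -/
noncomputable def limitProd (a : ℚ) (k r : ℕ) : PowerSeries ℚ :=
  PowerSeries.mk fun N =>
    PowerSeries.coeff (R := ℚ) N
      (∏ n ∈ Finset.Icc 1 N,
        ((1 - PowerSeries.X ^ (r * n))⁻¹ *
          ((1 + PowerSeries.C (R := ℚ) a * PowerSeries.X ^ n + PowerSeries.X ^ (2 * n))⁻¹) ^ k))

namespace MacMahonAux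

noncomputable def g (a : ℚ) (n : ℕ) : PowerSeries ℚ :=
  (1 + PowerSeries.C (R := ℚ) a * X ^ n + X ^ (2 * n))⁻¹

noncomputable def Sfin (a : ℚ) (t k r m N : ℕ) : PowerSeries ℚ :=
  ∑ s ∈ Finset.powersetCard t (Finset.Icc m N),
    X ^ (r * s.sum id) * ∏ n ∈ s, (g a n) ^ k

noncomputable def E (r t : ℕ) : PowerSeries ℚ :=
  ∏ i ∈ Finset.Icc 1 t, (1 - X ^ (r * i))⁻¹

noncomputable def G (a : ℚ) (k m t : ℕ) : PowerSeries ℚ :=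
  ∏ j ∈ Finset.range t, (g a (m + j)) ^ k

def sig (t m : ℕ) : ℕ := ∑ i ∈ Finset.range t, (m + i)

lemma constCoeff_base (a : ℚ) {n : ℕ} (hn : 1 ≤ n) :
    constantCoeff (R := ℚ) (1 + PowerSeries.C (R := ℚ) a * X ^ n + X ^ (2 * n)) = 1 := by
  have h1 : n ≠ 0 := by omega
  have h2 : 2 * n ≠ 0 := by omega
  rw [map_add, map_add, map_mul, map_pow, map_pow, constantCoeff_X, constantCoeff_one,
    constantCoeff_C, zero_pow h1, zero_pow h2, mul_zero, add_zero, add_zero]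

lemma g_spec (a : ℚ) {n : ℕ} (hn : 1 ≤ n) :
    g a n * (1 + PowerSeries.C (R := ℚ) a * X ^ n + X ^ (2 * n)) = 1 :=
  PowerSeries.inv_mul_cancel _ (by rw [constCoeff_base a hn]; norm_num)

lemma one_sub_spec {u : ℕ} (hu : 1 ≤ u) :
    ((1 - X ^ u : PowerSeries ℚ)⁻¹) * (1 - X ^ u) = 1 := by
  refine PowerSeries.inv_mul_cancel _ ?_
  have h1 : u ≠ 0 := by omega
  rw [map_sub, map_pow, constantCoeff_X, constantCoeff_one, zero_pow h1, sub_zero]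
  norm_num

lemma X_dvd_g_sub_one (a : ℚ) {n : ℕ} (hn : 1 ≤ n) :
    (X : PowerSeries ℚ) ^ n ∣ g a n - 1 := by
  refine ⟨-(g a n * (PowerSeries.C (R := ℚ) a + X ^ n)), ?_⟩
  linear_combination g_spec a hn

lemma X_dvd_inv_one_sub {u : ℕ} (hu : 1 ≤ u) :
    (X : PowerSeries ℚ) ^ u ∣ (1 - X ^ u : PowerSeries ℚ)⁻¹ - 1 := by
  refine ⟨(1 - X ^ u : PowerSeries ℚ)⁻¹, ?_⟩
  linear_combination one_sub_spec (u := u) hu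

lemma dvd_pow_sub_one {c : ℕ} {f : PowerSeries ℚ} (h : (X : PowerSeries ℚ) ^ c ∣ f - 1) :
    ∀ k : ℕ, (X : PowerSeries ℚ) ^ c ∣ f ^ k - 1 := by
  intro k
  induction k with
  | zero => simp
  | succ k ih =>
      have : f ^ (k + 1) - 1 = f ^ k * (f - 1) + (f ^ k - 1) := by ring
      rw [this]
      exact dvd_add (Dvd.dvd.mul_left h _) ih

lemma dvd_mul_sub_one {c : ℕ} {f h : PowerSeries ℚ}
    (hf : (X : PowerSeries ℚ) ^ c ∣ f - 1) (hh : (X : PowerSeries ℚ) ^ c ∣ h - 1) :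
    (X : PowerSeries ℚ) ^ c ∣ f * h - 1 := by
  have : f * h - 1 = f * (h - 1) + (f - 1) := by ring
  rw [this]
  exact dvd_add (Dvd.dvd.mul_left hh _) hf

lemma dvd_prod_sub_one {c : ℕ} {ι : Type*} (s : Finset ι) (F : ι → PowerSeries ℚ)
    (h : ∀ i ∈ s, (X : PowerSeries ℚ) ^ c ∣ F i - 1) :
    (X : PowerSeries ℚ) ^ c ∣ (∏ i ∈ s, F i) - 1 := by
  classical
  induction s using Finset.induction with
  | empty => simp
  | insert _ _ hx ih =>
      rw [Finset.prod_insert hx]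
      exact dvd_mul_sub_one (h _ (Finset.mem_insert_self _ _))
        (ih fun i hi => h i (Finset.mem_insert_of_mem hi))

lemma coeff_eq_of_dvd {c j : ℕ} {A B : PowerSeries ℚ}
    (h : (X : PowerSeries ℚ) ^ c ∣ A - B) (hj : j < c) :
    PowerSeries.coeff (R := ℚ) j A = PowerSeries.coeff (R := ℚ) j B := by
  have := PowerSeries.X_pow_dvd_iff.mp h j hj
  rw [map_sub, sub_eq_zero] at this
  exact this

lemma G_sub_one (a : ℚ) (k : ℕ) {m : ℕ} (hm : 1 ≤ m) (t : ℕ) :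
    (X : PowerSeries ℚ) ^ m ∣ G a k m t - 1 := by
  refine dvd_prod_sub_one _ _ fun j hj => ?_
  exact (pow_dvd_pow (X : PowerSeries ℚ) (Nat.le_add_right m j)).trans
    (dvd_pow_sub_one (X_dvd_g_sub_one a (by omega)) k)


lemma sig_zero (m : ℕ) : sig 0 m = 0 := by simp [sig]

lemma sig_succ_m (t m : ℕ) : sig t (m + 1) = sig t m + t := by
  unfold sig
  have h : ∀ i ∈ Finset.range t, m + 1 + i = (m + i) + 1 := fun i _ => by omega
  rw [Finset.sum_congr rfl h, Finset.sum_add_distrib]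
  simp

lemma sig_split (t m : ℕ) : sig (t + 1) m = m + sig t (m + 1) := by
  unfold sig
  rw [Finset.sum_range_succ']
  have h : ∀ i ∈ Finset.range t, m + (i + 1) = (m + 1) + i := fun i _ => by omega
  rw [Finset.sum_congr rfl h, Nat.add_zero, add_comm]
  rfl

lemma le_sig {t m : ℕ} (ht : 1 ≤ t) : m ≤ sig t m := by
  obtain ⟨t, rfl⟩ := Nat.exists_eq_add_of_le ht
  rw [add_comm, sig_split]
  omega

lemma two_sig_one (t : ℕ) : 2 * sig t 1 = t * (t + 1) := by
  induction t with
  | zero => simp [sig]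
  | succ t ih =>
      unfold sig
      rw [Finset.sum_range_succ]
      have h : sig t 1 = ∑ i ∈ Finset.range t, (1 + i) := rfl
      rw [← h]
      calc 2 * (sig t 1 + (1 + t)) = 2 * sig t 1 + 2 * (1 + t) := by ring
        _ = t * (t + 1) + 2 * (1 + t) := by rw [ih]
        _ = (t + 1) * (t + 1 + 1) := by ring

lemma sig_one (t : ℕ) : sig t 1 = t * (t + 1) / 2 := by
  have h := two_sig_one t
  omega

lemma G_zero (a : ℚ) (k m : ℕ) : G a k m 0 = 1 := by simp [G]

lemma G_split (a : ℚ) (k m t : ℕ) :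
    G a k m (t + 1) = (g a m) ^ k * G a k (m + 1) t := by
  unfold G
  rw [Finset.prod_range_succ']
  have h1 : ∀ i ∈ Finset.range t, g a (m + (i + 1)) ^ k = g a ((m + 1) + i) ^ k :=
    fun i _ => by rw [show m + (i + 1) = (m + 1) + i by omega]
  rw [Finset.prod_congr rfl h1, mul_comm]
  simp

lemma E_succ (r t : ℕ) : E r (t + 1) = E r t * (1 - X ^ (r * (t + 1)))⁻¹ := by
  unfold E
  exact Finset.prod_Icc_succ_top (by omega) _

lemma E_spec {r : ℕ} (t : ℕ) (hr : 1 ≤ r) :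
    E r (t + 1) * (1 - X ^ (r * (t + 1))) = E r t := by
  rw [E_succ, mul_assoc, one_sub_spec (Nat.mul_pos hr t.succ_pos), mul_one]


lemma Sfin_trunc (a : ℚ) (t k : ℕ) {r : ℕ} (hr : 1 ≤ r) (m : ℕ) {N₁ N₂ : ℕ}
    (hN : N₁ ≤ N₂) :
    (X : PowerSeries ℚ) ^ (N₁ + 1) ∣ Sfin a t k r m N₂ - Sfin a t k r m N₁ := by
  unfold Sfin
  have hsub : Finset.powersetCard t (Finset.Icc m N₁) ⊆
      Finset.powersetCard t (Finset.Icc m N₂) :=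
    Finset.powersetCard_mono (Finset.Icc_subset_Icc_right hN)
  rw [← Finset.sum_sdiff hsub, add_sub_cancel_right]
  refine Finset.dvd_sum fun s hs => ?_
  rw [Finset.mem_sdiff, Finset.mem_powersetCard] at hs
  obtain ⟨⟨hs2, hcard⟩, hns⟩ := hs
  have hx : ∃ x ∈ s, N₁ + 1 ≤ x := by
    by_contra hc
    push_neg at hc
    exact hns (Finset.mem_powersetCard.mpr ⟨fun y hy => by
      have := hs2 hy
      rw [Finset.mem_Icc] at this ⊢
      exact ⟨this.1, by have := hc y hy; omega⟩, hcard⟩)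
  obtain ⟨x, hxs, hxN⟩ := hx
  have hsum : N₁ + 1 ≤ r * s.sum id := by
    have h1 : x ≤ s.sum id := Finset.single_le_sum (fun i _ => Nat.zero_le (id i)) hxs
    have h2 : s.sum id ≤ r * s.sum id := Nat.le_mul_of_pos_left _ hr
    omega
  exact Dvd.dvd.mul_right (pow_dvd_pow _ hsum) _

lemma prod_trunc (F : ℕ → PowerSeries ℚ)
    (hF : ∀ n, 1 ≤ n → (X : PowerSeries ℚ) ^ n ∣ F n - 1) {N₁ N₂ : ℕ} (hN : N₁ ≤ N₂) :
    (X : PowerSeries ℚ) ^ (N₁ + 1) ∣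
      (∏ n ∈ Finset.Icc 1 N₂, F n) - ∏ n ∈ Finset.Icc 1 N₁, F n := by
  have h0 : ∀ M : ℕ, Finset.Icc 1 M = Finset.Ioc 0 M := fun M => by
    ext x; simp [Finset.mem_Icc, Finset.mem_Ioc]; omega
  rw [h0, h0, ← Finset.prod_Ioc_consecutive F (Nat.zero_le N₁) hN]
  have key : (X : PowerSeries ℚ) ^ (N₁ + 1) ∣ (∏ n ∈ Finset.Ioc N₁ N₂, F n) - 1 := by
    refine dvd_prod_sub_one _ _ fun n hn => ?_
    rw [Finset.mem_Ioc] at hn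
    exact (pow_dvd_pow (X : PowerSeries ℚ) hn.1).trans (hF n (by omega))
  obtain ⟨w, hw⟩ := key
  refine ⟨(∏ n ∈ Finset.Ioc 0 N₁, F n) * w, ?_⟩
  calc (∏ n ∈ Finset.Ioc 0 N₁, F n) * (∏ n ∈ Finset.Ioc N₁ N₂, F n) -
        ∏ n ∈ Finset.Ioc 0 N₁, F n
      = (∏ n ∈ Finset.Ioc 0 N₁, F n) * ((∏ n ∈ Finset.Ioc N₁ N₂, F n) - 1) := by ring
    _ = _ := by rw [hw]; ring

lemma Sfin_rec (a : ℚ) (t k r : ℕ) {m N : ℕ} (hm : m ≤ N) :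
    Sfin a (t + 1) k r m N =
      Sfin a (t + 1) k r (m + 1) N +
        X ^ (r * m) * ((g a m) ^ k * Sfin a t k r (m + 1) N) := by
  classical
  have hIcc : Finset.Icc m N = insert m (Finset.Icc (m + 1) N) := by
    ext x; simp [Finset.mem_Icc, Finset.mem_insert]; omega
  have hmem : m ∉ Finset.Icc (m + 1) N := by simp
  unfold Sfin
  rw [hIcc, Finset.powersetCard_succ_insert hmem]
  rw [Finset.sum_union]
  · congr 1
    rw [Finset.sum_image]
    · rw [Finset.mul_sum, Finset.mul_sum]
      refine Finset.sum_congr rfl fun s hs => ?_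
      rw [Finset.mem_powersetCard] at hs
      have hms : m ∉ s := fun hc => by
        have := hs.1 hc; rw [Finset.mem_Icc] at this; omega
      rw [Finset.sum_insert hms, Finset.prod_insert hms, id_eq, Nat.mul_add, pow_add]
      ring
    · intro u hu v hv huv
      rw [Finset.mem_coe, Finset.mem_powersetCard] at hu hv
      have hmu : m ∉ u := fun hc => by
        have := hu.1 hc; rw [Finset.mem_Icc] at this; omega
      have hmv : m ∉ v := fun hc => by
        have := hv.1 hc; rw [Finset.mem_Icc] at this; omega
      have := congrArg (fun s => Finset.erase s m) huv
      simpa [Finset.erase_insert, hmu, hmv] using this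
  · rw [Finset.disjoint_left]
    intro s hs hsi
    rw [Finset.mem_powersetCard] at hs
    rw [Finset.mem_image] at hsi
    obtain ⟨u, _, rfl⟩ := hsi
    have : m ∈ insert m u := Finset.mem_insert_self _ _
    have := hs.1 this
    rw [Finset.mem_Icc] at this
    omega


lemma key (a : ℚ) (k : ℕ) {r : ℕ} (hr : 1 ≤ r) :
    ∀ d t m N : ℕ, 1 ≤ m → N + 1 = m + d →
      (X : PowerSeries ℚ) ^ (min (r * sig t m + t + m) (N + 1)) ∣
        Sfin a t k r m N - X ^ (r * sig t m) * (E r t * G a k m t) := by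
  intro d
  induction d with
  | zero =>
      intro t m N hm hN
      have hIcc : Finset.Icc m N = ∅ := Finset.Icc_eq_empty (by omega)
      match t with
      | 0 =>
          have h1 : Sfin a 0 k r m N = 1 := by unfold Sfin; simp
          rw [h1, sig_zero]
          simp [E, G]
      | t + 1 =>
          have h1 : Sfin a (t + 1) k r m N = 0 := by
            unfold Sfin; rw [hIcc, Finset.powersetCard_eq_empty.mpr (by simp)]
            simp
          rw [h1, zero_sub, dvd_neg]
          have h2 : m ≤ sig (t + 1) m := le_sig (by omega)
          have h3 : sig (t + 1) m ≤ r * sig (t + 1) m := Nat.le_mul_of_pos_left _ hr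
          have hle : min (r * sig (t + 1) m + (t + 1) + m) (N + 1) ≤ r * sig (t + 1) m := by
            omega
          exact Dvd.dvd.mul_right (pow_dvd_pow _ hle) _
  | succ d ih =>
      intro t m N hm hN
      have hmN : m ≤ N := by omega
      match t with
      | 0 =>
          have h1 : Sfin a 0 k r m N = 1 := by unfold Sfin; simp
          rw [h1, sig_zero]
          simp [E, G]
      | t + 1 =>
          have hrec := Sfin_rec a t k r hmN
          have ih1 := ih (t + 1) (m + 1) N (by omega) (by omega)
          have ih2 := ih t (m + 1) N (by omega) (by omega)
          rw [sig_succ_m] at ih1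
          have e2 : sig (t + 1) m = m + sig t (m + 1) := sig_split t m
          have hrs : r * sig (t + 1) m = r * m + r * sig t (m + 1) := by
            rw [e2]; ring
          have hmul1 : r * sig (t + 1) m ≤ r * (sig (t + 1) m + (t + 1)) :=
            Nat.mul_le_mul_left r (by omega)
          have hrm : m ≤ r * m := Nat.le_mul_of_pos_left _ hr
          set c := min (r * sig (t + 1) m + (t + 1) + m) (N + 1) with hc
          -- the three pieces
          have split :
              Sfin a (t + 1) k r m N -
                  X ^ (r * sig (t + 1) m) * (E r (t + 1) * G a k m (t + 1)) =
                (Sfin a (t + 1) k r (m + 1) N -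
                    X ^ (r * (sig (t + 1) m + (t + 1))) *
                      (E r (t + 1) * G a k (m + 1) (t + 1))) +
                X ^ (r * m) * ((g a m) ^ k *
                  (Sfin a t k r (m + 1) N -
                    X ^ (r * sig t (m + 1)) * (E r t * G a k (m + 1) t))) +
                (X ^ (r * (sig (t + 1) m + (t + 1))) *
                    (E r (t + 1) * G a k (m + 1) (t + 1)) +
                  X ^ (r * m) * ((g a m) ^ k *
                    (X ^ (r * sig t (m + 1)) * (E r t * G a k (m + 1) t))) -
                  X ^ (r * sig (t + 1) m) * (E r (t + 1) * G a k m (t + 1))) := by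
            rw [hrec]; ring
          rw [split]
          have dvd1 : (X : PowerSeries ℚ) ^ c ∣ _ :=
            (pow_dvd_pow (X : PowerSeries ℚ)
              (show c ≤ min (r * (sig (t + 1) m + (t + 1)) + (t + 1) + (m + 1)) (N + 1) by
                omega)).trans ih1
          have dvd2 : (X : PowerSeries ℚ) ^ c ∣
              X ^ (r * m) * ((g a m) ^ k *
                (Sfin a t k r (m + 1) N -
                  X ^ (r * sig t (m + 1)) * (E r t * G a k (m + 1) t))) := by
            have h4 := mul_dvd_mul_left ((X : PowerSeries ℚ) ^ (r * m)) (ih2.mul_left ((g a m) ^ k))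
            refine (pow_dvd_pow (X : PowerSeries ℚ) ?_).trans ((pow_add (X : PowerSeries ℚ) (r * m) _ ▸ h4))
            omega
          have hT : X ^ (r * (sig (t + 1) m + (t + 1))) *
                (E r (t + 1) * G a k (m + 1) (t + 1)) +
              X ^ (r * m) * ((g a m) ^ k *
                (X ^ (r * sig t (m + 1)) * (E r t * G a k (m + 1) t))) -
              X ^ (r * sig (t + 1) m) * (E r (t + 1) * G a k m (t + 1)) =
              X ^ (r * sig (t + 1) m) * (X ^ (r * (t + 1)) *
                (E r (t + 1) * (G a k (m + 1) (t + 1) - G a k m (t + 1)))) := by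
            have hG := G_split a k m t
            have hE := E_spec t hr
            rw [show r * (sig (t + 1) m + (t + 1)) = r * sig (t + 1) m + r * (t + 1) by ring]
            simp only [pow_add, hrs]
            rw [hG, ← hE]
            ring
          have hdG : (X : PowerSeries ℚ) ^ m ∣
              G a k (m + 1) (t + 1) - G a k m (t + 1) := by
            have h1 := G_sub_one a k (show 1 ≤ m + 1 by omega) (t + 1)
            have h2 := G_sub_one a k hm (t + 1)
            have h3 := dvd_sub ((pow_dvd_pow (X : PowerSeries ℚ) (Nat.le_succ m)).trans h1) h2
            rwa [sub_sub_sub_cancel_right] at h3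
          have dvd3' : (X : PowerSeries ℚ) ^ (r * sig (t + 1) m + (t + 1) + m) ∣
              X ^ (r * sig (t + 1) m) * (X ^ (r * (t + 1)) *
                (E r (t + 1) * (G a k (m + 1) (t + 1) - G a k m (t + 1)))) := by
            rw [pow_add, pow_add, mul_assoc]
            exact mul_dvd_mul dvd_rfl
              (mul_dvd_mul (pow_dvd_pow _ (Nat.le_mul_of_pos_left _ hr)) (hdG.mul_left _))
          have dvd3 : (X : PowerSeries ℚ) ^ c ∣ _ :=
            (pow_dvd_pow (X : PowerSeries ℚ) (min_le_left _ _)).trans (hT ▸ dvd3')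
          exact dvd_add (dvd_add dvd1 dvd2) dvd3

end MacMahonAux

/-- `q^{−r·t(t+1)/2}·U_{t,k,r}(a;q)` agrees with
`Π_{n≥1} 1/((1−q^{rn})(1+aqⁿ+q^{2n})^k)` in all coefficients up to and including `q^t`;
i.e. `U_{t,k,r}(a;q) = q^{r t(t+1)/2}·Π_{n≥1}(1−q^{rn})^{−1}(1+aqⁿ+q^{2n})^{−k}
+ O(q^{r t(t+1)/2 + t + 1})`. -/
theorem U_limiting_behavior (a : ℚ) (t k r : ℕ) (hk : 1 ≤ k) (hr : 1 ≤ r) :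
    ∀ j : ℕ, j < r * (t * (t + 1) / 2) + t + 1 →
      PowerSeries.coeff (R := ℚ) j (U a t k r) =
        PowerSeries.coeff (R := ℚ) j
          (PowerSeries.X ^ (r * (t * (t + 1) / 2)) * limitProd a k r) := by
  intro j hj
  have hsig : MacMahonAux.sig t 1 = t * (t + 1) / 2 := MacMahonAux.sig_one t
  -- step 1 : coefficient of U is coefficient of the truncated sum
  have hU : PowerSeries.coeff (R := ℚ) j (U a t k r) =
      PowerSeries.coeff (R := ℚ) j (MacMahonAux.Sfin a t k r 1 j) := by
    rw [U, PowerSeries.coeff_mk]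
    rfl
  -- step 2 : enlarge the truncation
  have hjN : j ≤ r * (t * (t + 1) / 2) + t := by omega
  have hU2 : PowerSeries.coeff (R := ℚ) j (MacMahonAux.Sfin a t k r 1 j) =
      PowerSeries.coeff (R := ℚ) j (MacMahonAux.Sfin a t k r 1 (r * (t * (t + 1) / 2) + t)) :=
    (MacMahonAux.coeff_eq_of_dvd (MacMahonAux.Sfin_trunc a t k hr 1 hjN) (by omega)).symm
  -- step 3 : key lemma
  have hkey := MacMahonAux.key a k hr (r * (t * (t + 1) / 2) + t) t 1
    (r * (t * (t + 1) / 2) + t) (by omega) (by omega)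
  rw [hsig] at hkey
  rw [min_self] at hkey
  have hU3 : PowerSeries.coeff (R := ℚ) j (MacMahonAux.Sfin a t k r 1 (r * (t * (t + 1) / 2) + t)) =
      PowerSeries.coeff (R := ℚ) j
        ((X : PowerSeries ℚ) ^ (r * (t * (t + 1) / 2)) *
          (MacMahonAux.E r t * MacMahonAux.G a k 1 t)) :=
    MacMahonAux.coeff_eq_of_dvd hkey (by omega)
  rw [hU, hU2, hU3]
  -- step 4 : identify E * G with the product over Icc 1 t
  have hEG : MacMahonAux.E r t * MacMahonAux.G a k 1 t =
      ∏ n ∈ Finset.Icc 1 t,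
        ((1 - (X : PowerSeries ℚ) ^ (r * n))⁻¹ *
          ((1 + PowerSeries.C (R := ℚ) a * X ^ n + X ^ (2 * n))⁻¹) ^ k) := by
    have hGIcc : MacMahonAux.G a k 1 t = ∏ n ∈ Finset.Icc 1 t, (MacMahonAux.g a n) ^ k := by
      rw [show Finset.Icc 1 t = Finset.Ico 1 (t + 1) by rw [Finset.Ico_add_one_right_eq_Icc],
        Finset.prod_Ico_eq_prod_range]
      rfl
    rw [MacMahonAux.E, hGIcc, ← Finset.prod_mul_distrib]
    rfl
  rw [hEG]
  -- step 5 : compare with limitProd coefficientwise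
  set F : ℕ → PowerSeries ℚ := fun n =>
    ((1 - (X : PowerSeries ℚ) ^ (r * n))⁻¹ *
      ((1 + PowerSeries.C (R := ℚ) a * X ^ n + X ^ (2 * n))⁻¹) ^ k) with hF
  have hFdvd : ∀ n, 1 ≤ n → (X : PowerSeries ℚ) ^ n ∣ F n - 1 := by
    intro n hn
    have h1 : (X : PowerSeries ℚ) ^ n ∣ (1 - (X : PowerSeries ℚ) ^ (r * n))⁻¹ - 1 :=
      (pow_dvd_pow _ (Nat.le_mul_of_pos_left _ hr)).trans
        (MacMahonAux.X_dvd_inv_one_sub (Nat.mul_pos hr hn))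
    have h2 : (X : PowerSeries ℚ) ^ n ∣
        ((1 + PowerSeries.C (R := ℚ) a * X ^ n + X ^ (2 * n))⁻¹ : PowerSeries ℚ) ^ k - 1 :=
      MacMahonAux.dvd_pow_sub_one (MacMahonAux.X_dvd_g_sub_one a hn) k
    exact MacMahonAux.dvd_mul_sub_one h1 h2
  rw [PowerSeries.coeff_X_pow_mul', PowerSeries.coeff_X_pow_mul']
  by_cases hjM : r * (t * (t + 1) / 2) ≤ j
  · rw [if_pos hjM, if_pos hjM]
    set d := j - r * (t * (t + 1) / 2) with hd
    have hdt : d ≤ t := by omega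
    have hlim : PowerSeries.coeff (R := ℚ) d (limitProd a k r) =
        PowerSeries.coeff (R := ℚ) d (∏ n ∈ Finset.Icc 1 d, F n) := by
      rw [limitProd, PowerSeries.coeff_mk]
    rw [hlim]
    exact MacMahonAux.coeff_eq_of_dvd (MacMahonAux.prod_trunc F hFdvd hdt) (Nat.lt_succ_self d)
  · rw [if_neg hjM, if_neg hjM]
end
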